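/- arXiv:1706.07412 — 6 statements merged into one kernel-verified Lean document; each statement's English description precedes it below -/
import Mathlib

section
/- A WLC game G with nonempty winning relation is FIR-solvable if and only if some player i has at least one surely winning choice and every choice of player i that is not surely winning is surely losing. -/
open Classical

/-- An `n`-player win-lose coordination (WLC) game: a finite domain of choices,
nonempty pairwise disjoint choice sets `C i` for the players, and a winning
relation `W` consisting of choice profiles. -/
structure WLC (n : ℕ) where
  A : Type
  finA : Finite A
  C : Fin n → Set A
  C_nonempty : ∀ i, (C i).Nonempty
  C_disjoint : ∀ i j, i ≠ j → Disjoint (C i) (C j)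
  W : Set (Fin n → A)
  W_sub : ∀ σ ∈ W, ∀ i, σ i ∈ C i

namespace WLC

variable {n : ℕ}

/-- `σ` is a choice profile w.r.t. the choice sets `Cs`. -/
def IsProfileOn {A : Type} (Cs : Fin n → Set A) (σ : Fin n → A) : Prop :=
  ∀ i, σ i ∈ Cs i

/-- `c` is a surely winning choice of player `i` w.r.t. choice sets `Cs`
and winning relation `W`. -/
def SWinOn {A : Type} (Cs : Fin n → Set A) (W : Set (Fin n → A)) (i : Fin n) (c : A) : Prop :=
  c ∈ Cs i ∧ ∀ σ, IsProfileOn Cs σ → σ i = c → σ ∈ W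

/-- `c` is a surely losing choice of player `i` w.r.t. choice sets `Cs`
and winning relation `W`. -/
def SLoseOn {A : Type} (Cs : Fin n → Set A) (W : Set (Fin n → A)) (i : Fin n) (c : A) : Prop :=
  c ∈ Cs i ∧ ∀ σ, IsProfileOn Cs σ → σ i = c → σ ∉ W

def IsProfile (G : WLC n) (σ : Fin n → G.A) : Prop := IsProfileOn G.C σ

def SurelyWinning (G : WLC n) (i : Fin n) (c : G.A) : Prop := SWinOn G.C G.W i c

def SurelyLosing (G : WLC n) (i : Fin n) (c : G.A) : Prop := SLoseOn G.C G.W i c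

/-- The winning extension of the choice `c` of player `i`: the (sets of) tuples of
choices of the other players that complete `c` to a winning profile.  (Technically we
use full profiles whose `i`-th coordinate is irrelevant, replacing it by `c`.) -/
def winExtOn {A : Type} (Cs : Fin n → Set A) (W : Set (Fin n → A)) (i : Fin n) (c : A) :
    Set (Fin n → A) :=
  {σ | (∀ j, j ≠ i → σ j ∈ Cs j) ∧ Function.update σ i c ∈ W}

def winExt (G : WLC n) (i : Fin n) (c : G.A) : Set (Fin n → G.A) := winExtOn G.C G.W i c

end WLC

namespace WLC

/-- Choice `a` of player `i` is strictly dominated (by some choice `b`): `a` is surely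
losing while `b` is surely winning. -/
def StrictlyDominated {n : ℕ} (G : WLC n) (i : Fin n) (a : G.A) : Prop :=
  a ∈ G.C i ∧ SurelyLosing G i a ∧ ∃ b ∈ G.C i, SurelyWinning G i b

/-- `G` is FIR-solvable: every profile in which no player plays a strictly dominated
choice is winning. -/
def FIRSolvable {n : ℕ} (G : WLC n) : Prop :=
  ∀ σ, G.IsProfile σ → (∀ i, ¬ StrictlyDominated G i (σ i)) → σ ∈ G.W

end WLC

open WLC

/-- A WLC game with nonempty winning relation is FIR-solvable iff some
player `i` has a surely winning choice and every choice of `i` that is not surely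
winning is surely losing. -/
theorem fir_solvable_iff {n : ℕ} (hn : 0 < n) (G : WLC n) (hW : G.W.Nonempty) :
    FIRSolvable G ↔
      ∃ i, (∃ c, SurelyWinning G i c) ∧
        ∀ c ∈ G.C i, ¬ SurelyWinning G i c → SurelyLosing G i c := by
  constructor
  · intro hF
    by_cases hSW : ∃ i c, SurelyWinning G i c
    · obtain ⟨i, b, hb⟩ := hSW
      refine ⟨i, ⟨b, hb⟩, ?_⟩
      intro c hc hcns
      by_contra hcnl
      have hex : ¬ (∀ σ, IsProfileOn G.C σ → σ i = c → σ ∈ G.W) :=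
        fun h => hcns ⟨hc, h⟩
      push_neg at hex
      obtain ⟨τ, hτp, hτi, hτw⟩ := hex
      apply hτw
      apply hF τ hτp
      intro j hdom
      obtain ⟨hmem, hSL, _⟩ := hdom
      by_cases hji : j = i
      · subst hji
        rw [hτi] at hSL
        exact hcnl hSL
      · -- τ j would be surely losing, but updating τ at i with b gives a winning profile
        have hπp : IsProfileOn G.C (Function.update τ i b) := by
          intro k
          by_cases hk : k = i
          · subst hk; simpa using hb.1
          · simpa [Function.update_of_ne hk] using hτp k
        have hπW : Function.update τ i b ∈ G.W :=
          hb.2 _ hπp (Function.update_self i b τ)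
        exact hSL.2 _ hπp (Function.update_of_ne hji b τ) hπW
    · -- no player has a surely winning choice: nothing is dominated, contradiction
      exfalso
      apply hSW
      obtain ⟨c, hc⟩ := G.C_nonempty ⟨0, hn⟩
      refine ⟨⟨0, hn⟩, c, hc, fun σ hσ _ => hF σ hσ fun j hdom => ?_⟩
      obtain ⟨b, _, hbw⟩ := hdom.2.2
      exact hSW ⟨j, b, hbw⟩
  · rintro ⟨i, ⟨b, hb⟩, hall⟩ σ hσ hnd
    by_cases hsw : SurelyWinning G i (σ i)
    · exact hsw.2 σ hσ rfl
    · exact absurd ⟨hσ i, hall (σ i) (hσ i) hsw, b, hb.1, hb⟩ (hnd i)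
end

section
/- Every BIR-solvable WLC game is either NL-solvable or SW-solvable, and conversely; hence s(BIR) = s(NL) ∪ s(SW). -/
open Classical

namespace WLC

variable {n : ℕ}

/-- The choices the NL principle (never play a surely losing choice, if possible)
allows for player `i`. -/
noncomputable def NLset (G : WLC n) (i : Fin n) : Set G.A :=
  if ∃ c ∈ G.C i, ¬ SurelyLosing G i c then {c ∈ G.C i | ¬ SurelyLosing G i c} else G.C i

/-- The choices the SW principle (play a surely winning choice, if possible)
allows for player `i`. -/
noncomputable def SWset (G : WLC n) (i : Fin n) : Set G.A :=
  if ∃ c, SurelyWinning G i c then {c | SurelyWinning G i c} else G.C i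

/-- The choices the BIR principle (= NL ∩ SW) allows for player `i`: a surely winning
choice if one exists, otherwise a non-surely-losing choice if one exists. -/
noncomputable def BIRset (G : WLC n) (i : Fin n) : Set G.A :=
  if ∃ c, SurelyWinning G i c then {c | SurelyWinning G i c}
  else if ∃ c ∈ G.C i, ¬ SurelyLosing G i c then {c ∈ G.C i | ¬ SurelyLosing G i c}
  else G.C i

noncomputable def NLSolvable (G : WLC n) : Prop :=
  ∀ σ, (∀ i, σ i ∈ NLset G i) → σ ∈ G.W

noncomputable def SWSolvable (G : WLC n) : Prop :=
  ∀ σ, (∀ i, σ i ∈ SWset G i) → σ ∈ G.W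

noncomputable def BIRSolvable (G : WLC n) : Prop :=
  ∀ σ, (∀ i, σ i ∈ BIRset G i) → σ ∈ G.W

end WLC

open WLC

/-- A WLC game is BIR-solvable iff it is NL-solvable or SW-solvable;
hence `s(BIR) = s(NL) ∪ s(SW)`. -/
theorem bir_solvable_iff_nl_or_sw {n : ℕ} (G : WLC n) :
    BIRSolvable G ↔ (NLSolvable G ∨ SWSolvable G) := by
  constructor
  · intro hB
    by_cases h : ∃ j, ∃ c, SurelyWinning G j c
    · right
      intro σ hσ
      obtain ⟨j, c, hc⟩ := h
      have hprof : IsProfileOn G.C σ := by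
        intro i
        have hi := hσ i
        unfold SWset at hi
        split at hi
        · exact hi.1
        · exact hi
      have hj := hσ j
      unfold SWset at hj
      rw [if_pos ⟨c, hc⟩] at hj
      exact hj.2 σ hprof rfl
    · left
      intro σ hσ
      apply hB
      intro i
      have hi : ¬ ∃ c, SurelyWinning G i c := fun ⟨c, hc⟩ => h ⟨i, c, hc⟩
      unfold BIRset
      rw [if_neg hi]
      have hni := hσ i
      unfold NLset at hni
      exact hni
  · intro h σ hσ
    cases h with
    | inl hNL =>
      apply hNL
      intro i
      have hi := hσ i
      unfold BIRset at hi
      unfold NLset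
      by_cases hsw : ∃ c, SurelyWinning G i c
      · rw [if_pos hsw] at hi
        have hc : σ i ∈ G.C i := hi.1
        have hnl : ¬ SurelyLosing G i (σ i) := by
          intro hL
          set τ : Fin n → G.A := fun j => if j = i then σ i else (G.C_nonempty j).choose with hτ
          have hprof : IsProfileOn G.C τ := by
            intro j
            by_cases hji : j = i
            · subst hji; simp [hτ, hc]
            · simp only [hτ, if_neg hji]; exact (G.C_nonempty j).choose_spec
          have hτi : τ i = σ i := by simp [hτ]
          exact hL.2 τ hprof hτi (hi.2 τ hprof hτi)
        rw [if_pos ⟨σ i, hc, hnl⟩]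
        exact ⟨hc, hnl⟩
      · rw [if_neg hsw] at hi
        exact hi
    | inr hSW =>
      apply hSW
      intro i
      have hi := hσ i
      unfold BIRset at hi
      unfold SWset
      by_cases hsw : ∃ c, SurelyWinning G i c
      · rw [if_pos hsw] at hi ⊢; exact hi
      · rw [if_neg hsw] at hi ⊢
        split at hi
        · exact hi.1
        · exact hi
end

section
/- For any principle P (a nonempty class of protocols), the collective iterated reasoning cir(P) solves every P-solvable game: s(P) ⊆ s(cir(P)). In particular, each iteration step of removing, for every player simultaneously, all choices not prescribed by any P-protocol yields a restricted game with nonempty choice sets, and if the original game is P-solvable so is the reduced game. -/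
open Classical

namespace WLC

/-- A protocol: for every WLC game and every player, a nonempty set of acceptable
choices of that player. -/
structure Protocol (n : ℕ) where
  sel : (G : WLC n) → Fin n → Set G.A
  sel_sub : ∀ G i, sel G i ⊆ G.C i
  sel_nonempty : ∀ G i, (sel G i).Nonempty

/-- A principle (set of protocols) `P` solves the game `G`:
`Σ₁(G,1) × ⋯ × Σₙ(G,n) ⊆ W` for all protocols `Σ₁, …, Σₙ ∈ P`. -/
def Solves {n : ℕ} (P : Set (Protocol n)) (G : WLC n) : Prop :=
  ∀ Ss : Fin n → Protocol n, (∀ i, Ss i ∈ P) →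
    ∀ σ, (∀ i, σ i ∈ (Ss i).sel G i) → σ ∈ G.W

end WLC

namespace WLC

/-- One step of collective iterated reasoning: restrict the game to the choices
prescribed by some protocol of the principle `P` (simultaneously for every player).
The new choice sets are nonempty, so this is again a WLC game. -/
noncomputable def reduce {n : ℕ} (P : Set (Protocol n)) (hP : P.Nonempty) (G : WLC n) :
    WLC n where
  A := G.A
  finA := G.finA
  C := fun i => ⋃ S ∈ P, S.sel G i
  C_nonempty := fun i => by
    obtain ⟨S, hS⟩ := hP
    obtain ⟨c, hc⟩ := S.sel_nonempty G i
    exact ⟨c, Set.mem_biUnion hS hc⟩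
  C_disjoint := fun i j h =>
    (G.C_disjoint i j h).mono (Set.iUnion₂_subset fun S _ => S.sel_sub G i)
      (Set.iUnion₂_subset fun S _ => S.sel_sub G j)
  W := G.W ∩ {σ | ∀ i, σ i ∈ ⋃ S ∈ P, S.sel G i}
  W_sub := fun _ h i => h.2 i

/-- The iterated reduction of collective iterated reasoning `cir(P)`. -/
noncomputable def reduceIter {n : ℕ} (P : Set (Protocol n)) (hP : P.Nonempty) (G : WLC n) :
    ℕ → WLC n
  | 0 => G
  | k + 1 => reduce P hP (reduceIter P hP G k)

end WLC

open WLC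

/-- For any (nonempty) principle `P`, collective iterated reasoning solves
every `P`-solvable game: if `G` is `P`-solvable then so is every iterated reduct of `G`,
and hence `s(P) ⊆ s(cir(P))`.  (That each reduced game has nonempty choice sets is part
of the construction `reduce`.) -/
theorem solves_reduceIter {n : ℕ} (P : Set (Protocol n)) (hP : P.Nonempty) (G : WLC n)
    (h : Solves P G) : ∀ k, Solves P (reduceIter P hP G k) := by
  have key : ∀ G', Solves P G' → Solves P (reduce P hP G') := by
    intro G' hG' Ss hSs σ hσ
    have hmem : ∀ i, σ i ∈ ⋃ S ∈ P, S.sel G' i := fun i => (Ss i).sel_sub _ i (hσ i)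
    refine ⟨?_, hmem⟩
    choose T hT hTmem using fun i => Set.mem_iUnion₂.mp (hmem i)
    exact hG' T hT σ hTmem
  intro k
  induction k with
  | zero => exact h
  | succ k ih => exact key _ ih
end

section
/- s(BCR) ⊆ s(BIR+): if, after removing all surely losing choices of every player from a WLC game G, some player i has a choice that is surely winning in the reduced game, then that choice is an optimal choice of player i in the original game G; consequently, every BCR-solvable game is won when every player plays an optimal choice if she has one and otherwise a non-surely-losing choice. -/
open Classical

namespace WLC

variable {n : ℕ}

/-- The set of non-surely-losing choices of player `i`. -/
def nonLosing (G : WLC n) (i : Fin n) : Set G.A :=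
  {c ∈ G.C i | ¬ SurelyLosing G i c}

/-- `c` is an optimal choice of player `i`: it is at least as good as every choice of
`i`, i.e. its winning extension contains the winning extension of every choice of `i`. -/
def Optimal (G : WLC n) (i : Fin n) (c : G.A) : Prop :=
  c ∈ G.C i ∧ ∀ c' ∈ G.C i, winExt G i c' ⊆ winExt G i c

/-- The BCR-prescribed choices: in the game restricted to non-surely-losing choices,
play a surely winning choice when one exists, else any (non-surely-losing) choice. -/
noncomputable def BCRset (G : WLC n) (i : Fin n) : Set G.A :=
  if ∃ c, SWinOn (nonLosing G) G.W i c then {c | SWinOn (nonLosing G) G.W i c}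
  else nonLosing G i

/-- `G` is BCR-solvable: after removing all surely losing choices of every player,
some player has a surely winning choice, and the BCR-prescribed profiles are winning. -/
noncomputable def BCRSolvable (G : WLC n) : Prop :=
  (∃ i c, SWinOn (nonLosing G) G.W i c) ∧
  ∀ σ, (∀ i, σ i ∈ BCRset G i) → σ ∈ G.W

/-- The BIR⁺-prescribed choices: an optimal non-surely-losing choice when one exists,
else a non-surely-losing choice when one exists, else any choice. -/
noncomputable def BIRplusSet (G : WLC n) (i : Fin n) : Set G.A :=
  if ∃ c, Optimal G i c ∧ ¬ SurelyLosing G i c then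
    {c | Optimal G i c ∧ ¬ SurelyLosing G i c}
  else if ∃ c ∈ G.C i, ¬ SurelyLosing G i c then nonLosing G i
  else G.C i

/-- `G` is BIR⁺-solvable: every profile in which each player plays an optimal
non-surely-losing choice when possible (else merely a non-surely-losing choice)
is winning. -/
noncomputable def BIRplusSolvable (G : WLC n) : Prop :=
  ∀ σ, (∀ i, σ i ∈ BIRplusSet G i) → σ ∈ G.W

/-- `G` is IOC-solvable: every profile in which each player who has an optimal choice
plays one (players without optimal choices playing arbitrarily) is winning. -/
def IOCSolvable (G : WLC n) : Prop :=
  ∀ σ, G.IsProfile σ →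
    (∀ i, (∃ c, Optimal G i c) → Optimal G i (σ i)) → σ ∈ G.W

end WLC

open WLC

/-- `s(BCR) ⊆ s(BIR⁺)`: every choice that is surely winning in the game
reduced to non-surely-losing choices is an optimal choice in the original game;
consequently every BCR-solvable game is BIR⁺-solvable. -/
theorem bcr_subset_bir_plus {n : ℕ} (G : WLC n) (hW : G.W.Nonempty) :
    (∀ i c, SWinOn (nonLosing G) G.W i c → Optimal G i c) ∧
    (BCRSolvable G → BIRplusSolvable G) := by
  -- every player has a non-surely-losing choice
  obtain ⟨σ₀, hσ₀⟩ := hW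
  have hNL : ∀ i, σ₀ i ∈ nonLosing G i := by
    intro i
    refine ⟨G.W_sub σ₀ hσ₀ i, fun hsl => ?_⟩
    exact hsl.2 σ₀ (fun j => G.W_sub σ₀ hσ₀ j) rfl hσ₀
  -- Part 1
  have part1 : ∀ i c, SWinOn (nonLosing G) G.W i c → Optimal G i c := by
    intro i c hc
    refine ⟨hc.1.1, fun c' _ τ hτ => ?_⟩
    obtain ⟨hτC, hτW⟩ := hτ
    -- each coordinate j ≠ i of τ is non-surely-losing
    have hτNL : ∀ j, j ≠ i → τ j ∈ nonLosing G j := by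
      intro j hj
      refine ⟨hτC j hj, fun hsl => ?_⟩
      exact hsl.2 (Function.update τ i c')
        (fun k => G.W_sub _ hτW k)
        (by rw [Function.update_of_ne hj]) hτW
    refine ⟨hτC, hc.2 (Function.update τ i c) ?_ (Function.update_self i c τ)⟩
    intro j
    by_cases hj : j = i
    · subst hj; simpa using hc.1
    · rw [Function.update_of_ne hj]; exact hτNL j hj
  refine ⟨part1, fun hBCR σ hσ => ?_⟩
  obtain ⟨-, hwin⟩ := hBCR
  apply hwin
  intro i
  have hσi := hσ i
  unfold BCRset
  unfold BIRplusSet at hσi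
  by_cases hsw : ∃ c, SWinOn (nonLosing G) G.W i c
  · rw [if_pos hsw]
    obtain ⟨c, hc⟩ := hsw
    have hopt : ∃ c, Optimal G i c ∧ ¬ SurelyLosing G i c :=
      ⟨c, part1 i c hc, hc.1.2⟩
    rw [if_pos hopt] at hσi
    obtain ⟨hσopt, hσnl⟩ := hσi
    -- σ i is surely winning in the reduced game
    refine ⟨⟨hσopt.1, hσnl⟩, fun τ hτ hτi => ?_⟩
    have hmem : τ ∈ winExt G i c := by
      refine ⟨fun j _ => (hτ j).1, ?_⟩
      exact hc.2 (Function.update τ i c)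
        (fun j => by
          by_cases hj : j = i
          · subst hj; simpa using hc.1
          · rw [Function.update_of_ne hj]; exact hτ j)
        (Function.update_self i c τ)
    have := hσopt.2 c hc.1.1 hmem
    have h2 := this.2
    rwa [← hτi, Function.update_eq_self] at h2
  · rw [if_neg hsw]
    by_cases hopt : ∃ c, Optimal G i c ∧ ¬ SurelyLosing G i c
    · rw [if_pos hopt] at hσi
      exact ⟨hσi.1.1, hσi.2⟩
    · rw [if_neg hopt, if_pos ⟨σ₀ i, (hNL i).1, (hNL i).2⟩] at hσi
      exact hσi
end

section
/- The 3-player WLC game G* with C_i = {a_i, b_i} and W = {(a_1,a_2,a_3), (a_1,a_2,b_3), (a_1,b_2,b_3), (b_1,b_2,b_3)} is IOC-solvable but not BCR-solvable: a_1 is the unique optimal choice of player 1, b_3 is the unique optimal choice of player 3, player 2 has no optimal choice, every profile in which players 1 and 3 play a_1 and b_3 is winning, and no player has a surely winning or surely losing choice. -/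
open Classical

open WLC

/-- The 3-player game `G*`: choices `aᵢ = (i,0)`, `bᵢ = (i,1)`;
`W = {(a₁,a₂,a₃), (a₁,a₂,b₃), (a₁,b₂,b₃), (b₁,b₂,b₃)}`. -/
def Gstar : WLC 3 where
  A := Fin 3 × Fin 2
  finA := inferInstance
  C := fun i => {a | a.1 = i}
  C_nonempty := fun i => ⟨(i, 0), rfl⟩
  C_disjoint := fun i j h => Set.disjoint_left.mpr fun a ha hb => h (ha.symm.trans hb)
  W := {σ | (σ 0 = (0,0) ∧ σ 1 = (1,0) ∧ σ 2 = (2,0)) ∨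
            (σ 0 = (0,0) ∧ σ 1 = (1,0) ∧ σ 2 = (2,1)) ∨
            (σ 0 = (0,0) ∧ σ 1 = (1,1) ∧ σ 2 = (2,1)) ∨
            (σ 0 = (0,1) ∧ σ 1 = (1,1) ∧ σ 2 = (2,1))}
  W_sub := by
    rintro σ (⟨h0, h1, h2⟩ | ⟨h0, h1, h2⟩ | ⟨h0, h1, h2⟩ | ⟨h0, h1, h2⟩) i <;>
      fin_cases i <;> simp [Set.mem_setOf_eq, h0, h1, h2]

/-!
A choice `c` of player `i` is optimal exactly when moving player `i` to `c` keeps every winning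
profile winning. Writing `0` for `aᵢ` and `1` for `bᵢ`, the winning profiles of `G*` are exactly
the monotone ones, `x₁ ≤ x₂ ≤ x₃`. Lowering `x₁` or raising `x₃` preserves monotonicity, so `a₁`
and `b₃` are optimal; player 2 sits in the middle and either of his choices breaks one of the
winning profiles `(a₁, a₂, a₃)` and `(b₁, b₂, b₃)`. Every choice occurs in one of these two and in
one of the non-monotone profiles `(a₁, b₂, a₃)` and `(b₁, a₂, b₃)`, so no choice is surely winning
or surely losing: removing surely losing choices changes nothing, and BCR finds no surely winning
choice.
-/

namespace WLC

variable {n : ℕ} {G : WLC n} {i : Fin n} {c : G.A} {σ : Fin n → G.A}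

theorem IsProfile.update (hσ : G.IsProfile σ) (hc : c ∈ G.C i) :
    G.IsProfile (Function.update σ i c) :=
  (Function.forall_update_iff σ (p := fun j x => x ∈ G.C j)).2 ⟨hc, fun j _ => hσ j⟩

theorem optimal_iff_forall_update_mem_W :
    G.Optimal i c ↔ c ∈ G.C i ∧ ∀ σ ∈ G.W, Function.update σ i c ∈ G.W := by
  refine ⟨fun ⟨hc, hopt⟩ => ⟨hc, fun σ hσ => ?_⟩, fun ⟨hc, hupd⟩ => ⟨hc, fun _ _ τ hτ => ?_⟩⟩
  · have hσ_ext : σ ∈ G.winExt i (σ i) :=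
      ⟨fun j _ => G.W_sub σ hσ j, by rwa [Function.update_eq_self]⟩
    exact (hopt (σ i) (G.W_sub σ hσ i) hσ_ext).2
  · refine ⟨hτ.1, ?_⟩
    simpa only [Function.update_idem] using hupd _ hτ.2

theorem Optimal.update_mem_W (h : G.Optimal i c) (hσ : σ ∈ G.W) :
    Function.update σ i c ∈ G.W :=
  (optimal_iff_forall_update_mem_W.1 h).2 σ hσ

theorem not_surelyLosing_of_mem_W (hσ : σ ∈ G.W) (i : Fin n) : ¬ G.SurelyLosing i (σ i) :=
  fun h => h.2 σ (G.W_sub σ hσ) rfl hσ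

theorem not_surelyWinning_of_not_mem_W (hσ : G.IsProfile σ) (hσW : σ ∉ G.W) (i : Fin n) :
    ¬ G.SurelyWinning i (σ i) :=
  fun h => hσW (h.2 σ hσ rfl)

theorem nonLosing_eq_C (h : ∀ i c, c ∈ G.C i → ¬ G.SurelyLosing i c) : G.nonLosing = G.C :=
  funext fun i => Set.ext fun c => ⟨And.left, fun hc => ⟨hc, h i c hc⟩⟩

theorem not_bcrSolvable
    (h : ∀ i c, c ∈ G.C i → ¬ G.SurelyWinning i c ∧ ¬ G.SurelyLosing i c) :
    ¬ G.BCRSolvable := by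
  rintro ⟨⟨i, c, hc⟩, -⟩
  rw [nonLosing_eq_C fun i c hc => (h i c hc).2] at hc
  exact (h i c hc.1).1 hc

end WLC

namespace Gstar

theorem mem_W_iff (σ : Fin 3 → Gstar.A) :
    σ ∈ Gstar.W ↔ Gstar.IsProfile σ ∧ (σ 0).2 ≤ (σ 1).2 ∧ (σ 1).2 ≤ (σ 2).2 := by
  refine ⟨fun h => ⟨Gstar.W_sub σ h, ?_⟩, fun ⟨hσ, h01, h12⟩ => ?_⟩
  · rcases h with ⟨h0, h1, h2⟩ | ⟨h0, h1, h2⟩ | ⟨h0, h1, h2⟩ | ⟨h0, h1, h2⟩ <;>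
      simp [h0, h1, h2]
  · obtain ⟨x, rfl⟩ : ∃ x : Fin 3 → Fin 2, σ = fun j => (j, x j) :=
      ⟨fun j => (σ j).2, funext fun j => Prod.ext (hσ j) rfl⟩
    revert h01 h12
    show x 0 ≤ x 1 → x 1 ≤ x 2 → _ ∨ _
    simp only [Prod.mk.injEq, true_and]
    generalize x 0 = a, x 1 = b, x 2 = c
    revert a b c
    decide

def uniform (k : Fin 2) : Fin 3 → Gstar.A := fun j => (j, k)

@[simp]
theorem uniform_apply_snd (k : Fin 2) (j : Fin 3) : (uniform k j).2 = k := rfl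

theorem uniform_mem_W (k : Fin 2) : uniform k ∈ Gstar.W :=
  (mem_W_iff _).2 ⟨fun _ => rfl, le_rfl, le_rfl⟩

theorem optimal_zero_iff {c : Gstar.A} : Optimal Gstar 0 c ↔ c = (0, 0) := by
  rw [optimal_iff_forall_update_mem_W]
  refine ⟨fun ⟨hc, hupd⟩ => ?_, fun hc => ⟨hc ▸ rfl, fun σ hσ => ?_⟩⟩
  · have h01 := ((mem_W_iff _).1 (hupd _ (uniform_mem_W 0))).2.1
    exact Prod.ext hc (nonpos_iff_eq_zero.1 (by simpa using h01))
  · obtain ⟨hprof, -, h12⟩ := (mem_W_iff σ).1 hσ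
    have hc2 : c.2 = 0 := by rw [hc]
    exact (mem_W_iff _).2 ⟨hprof.update (hc ▸ rfl), by simp [hc2], by simpa using h12⟩

theorem optimal_two_iff {c : Gstar.A} : Optimal Gstar 2 c ↔ c = (2, 1) := by
  rw [optimal_iff_forall_update_mem_W]
  refine ⟨fun ⟨hc, hupd⟩ => ?_, fun hc => ⟨hc ▸ rfl, fun σ hσ => ?_⟩⟩
  · have h12 := ((mem_W_iff _).1 (hupd _ (uniform_mem_W 1))).2.2
    exact Prod.ext hc (Fin.last_le_iff.1 (by simpa using h12))
  · obtain ⟨hprof, h01, -⟩ := (mem_W_iff σ).1 hσ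
    have hc2 : c.2 = 1 := by rw [hc]
    exact (mem_W_iff _).2 ⟨hprof.update (hc ▸ rfl), by simpa using h01,
      by simp only [Function.update_self, hc2]; exact Fin.le_last _⟩

theorem not_optimal_one (c : Gstar.A) : ¬ Optimal Gstar 1 c := by
  intro h
  have hb : 1 ≤ c.2 := by simpa using ((mem_W_iff _).1 (h.update_mem_W (uniform_mem_W 1))).2.1
  have ha : c.2 ≤ 0 := by simpa using ((mem_W_iff _).1 (h.update_mem_W (uniform_mem_W 0))).2.2
  exact absurd (hb.trans ha) (by decide)

theorem mem_W_of_apply_zero_of_apply_two {σ : Fin 3 → Gstar.A} (hσ : Gstar.IsProfile σ)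
    (h0 : σ 0 = (0, 0)) (h2 : σ 2 = (2, 1)) : σ ∈ Gstar.W :=
  (mem_W_iff σ).2 ⟨hσ, by simp [h0], by simp only [h2]; exact Fin.le_last _⟩

theorem not_surelyLosing {i : Fin 3} {c : Gstar.A} (hc : c ∈ Gstar.C i) :
    ¬ SurelyLosing Gstar i c := by
  have hσi : uniform c.2 i = c := Prod.ext hc.symm rfl
  exact hσi ▸ not_surelyLosing_of_mem_W (uniform_mem_W c.2) i

theorem not_surelyWinning {i : Fin 3} {c : Gstar.A} (hc : c ∈ Gstar.C i) :
    ¬ SurelyWinning Gstar i c := by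
  obtain ⟨x, k⟩ := c
  obtain rfl : i = x := hc.symm
  -- one of the non-monotone profiles `(a₁, b₂, a₃)`, `(b₁, a₂, b₃)` contains `(i, k)`
  let σ : Fin 3 → Gstar.A := fun j => (j, if (j = 1 ↔ i = 1) then k else 1 - k)
  have hσW : σ ∉ Gstar.W := by
    rw [mem_W_iff]
    fin_cases i <;> fin_cases k <;> simp [σ]
  simpa [σ] using not_surelyWinning_of_not_mem_W (fun _ => rfl) hσW i

end Gstar

/-- In `G*`, `a₁` is the unique optimal choice of player `1` (index `0`),
`b₃` is the unique optimal choice of player `3` (index `2`), player `2` (index `1`) has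
no optimal choice, every profile in which players `1` and `3` play `a₁` and `b₃` is
winning, no player has a surely winning or a surely losing choice; hence `G*` is
IOC-solvable but not BCR-solvable. -/
theorem Gstar_ioc_solvable_not_bcr_solvable :
    Optimal Gstar 0 (0,0) ∧ (∀ c, Optimal Gstar 0 c → c = (0,0)) ∧
    Optimal Gstar 2 (2,1) ∧ (∀ c, Optimal Gstar 2 c → c = (2,1)) ∧
    (¬ ∃ c, Optimal Gstar 1 c) ∧
    (∀ σ, Gstar.IsProfile σ → σ 0 = (0,0) → σ 2 = (2,1) → σ ∈ Gstar.W) ∧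
    (∀ i c, c ∈ Gstar.C i → ¬ SurelyWinning Gstar i c ∧ ¬ SurelyLosing Gstar i c) ∧
    IOCSolvable Gstar ∧ ¬ BCRSolvable Gstar := by
  have hneither : ∀ i c, c ∈ Gstar.C i → ¬ SurelyWinning Gstar i c ∧ ¬ SurelyLosing Gstar i c :=
    fun _ _ hc => ⟨Gstar.not_surelyWinning hc, Gstar.not_surelyLosing hc⟩
  have hioc : IOCSolvable Gstar := fun σ hσ hopt =>
    Gstar.mem_W_of_apply_zero_of_apply_two hσ
      (Gstar.optimal_zero_iff.1 (hopt 0 ⟨_, Gstar.optimal_zero_iff.2 rfl⟩))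
      (Gstar.optimal_two_iff.1 (hopt 2 ⟨_, Gstar.optimal_two_iff.2 rfl⟩))
  exact ⟨Gstar.optimal_zero_iff.2 rfl, fun _ => Gstar.optimal_zero_iff.1,
    Gstar.optimal_two_iff.2 rfl, fun _ => Gstar.optimal_two_iff.1,
    fun ⟨c, hc⟩ => Gstar.not_optimal_one c hc, fun _ => Gstar.mem_W_of_apply_zero_of_apply_two,
    hneither, hioc, not_bcrSolvable hneither⟩
end

section
/- No structural principle solves a structurally indeterminate WLC game: if G is a WLC game such that every winning profile exhibits a bad symmetry, and Σ is a structural protocol, then Σ(G,1) × ... × Σ(G,n) ⊄ W_G. -/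
open Classical

namespace WLC

variable {n : ℕ}

/-- A full renaming between WLC games `G` and `G'`: a permutation `β` of players and a
bijection `π : G.A ≃ G'.A` mapping `C i` onto `C' (β i)`, such that a profile is winning
in `G` iff the profile whose `β i`-th coordinate is `π` of the `i`-th coordinate is
winning in `G'`. -/
def IsFullRenamingBetween (G G' : WLC n) (β : Equiv.Perm (Fin n)) (π : G.A ≃ G'.A) :
    Prop :=
  (∀ i a, a ∈ G.C i ↔ π a ∈ G'.C (β i)) ∧
  (∀ σ, σ ∈ G.W ↔ (fun j => π (σ (β.symm j))) ∈ G'.W)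

/-- The structural equivalence class `[c]` of `c` under full renamings of `G`. -/
def scls (G : WLC n) (c : G.A) : Set G.A :=
  {c' | ∃ (i j : Fin n) (β : Equiv.Perm (Fin n)) (π : G.A ≃ G.A),
    c ∈ G.C i ∧ c' ∈ G.C j ∧ IsFullRenamingBetween G G β π ∧ β i = j ∧ π c = c'}

/-- `Sᵢ(σ) = C i ∩ ⋃_j [σ j]`. -/
def Ssym (G : WLC n) (σ : Fin n → G.A) (i : Fin n) : Set G.A :=
  G.C i ∩ ⋃ j, scls G (σ j)

/-- `σ` exhibits a bad symmetry: `S₁(σ) × ⋯ × Sₙ(σ) ⊄ W`. -/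
def ExhibitsBadSym (G : WLC n) (σ : Fin n → G.A) : Prop :=
  ∃ τ, (∀ i, τ i ∈ Ssym G σ i) ∧ τ ∉ G.W

/-- A protocol is structural if it is indifferent w.r.t. full renamings between games. -/
def Structural (S : Protocol n) : Prop :=
  ∀ (G G' : WLC n) (β : Equiv.Perm (Fin n)) (π : G.A ≃ G'.A),
    IsFullRenamingBetween G G' β π →
      ∀ i c, c ∈ S.sel G i ↔ π c ∈ S.sel G' (β i)

end WLC

open WLC

/-- No structural protocol solves a structurally indeterminate WLC game:
if every winning profile of `G` exhibits a bad symmetry, then for every structural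
protocol `S` we have `S(G,1) × ⋯ × S(G,n) ⊄ W`. -/
theorem structural_protocol_cannot_solve_indeterminate {n : ℕ} (G : WLC n)
    (hind : ∀ σ ∈ G.W, ExhibitsBadSym G σ)
    (S : Protocol n) (hS : Structural S) :
    ∃ σ, (∀ i, σ i ∈ S.sel G i) ∧ σ ∉ G.W := by
  choose σ hσ using fun i => S.sel_nonempty G i
  by_cases hW : σ ∈ G.W
  · obtain ⟨τ, hτ, hτW⟩ := hind σ hW
    refine ⟨τ, fun i => ?_, hτW⟩
    obtain ⟨hτCi, hU⟩ := hτ i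
    rw [Set.mem_iUnion] at hU
    obtain ⟨j, i', j', β, π, hσC, hτC, hren, hβ, hπ⟩ := hU
    -- σ j ∈ C j and σ j ∈ C i' ⇒ i' = j
    have hσCj : σ j ∈ G.C j := G.W_sub σ hW j
    have hi' : i' = j := by
      by_contra h
      exact (G.C_disjoint i' j h).ne_of_mem hσC hσCj rfl
    have hj' : j' = i := by
      by_contra h
      exact (G.C_disjoint j' i h).ne_of_mem hτC hτCi rfl
    have := (hS G G β π hren j (σ j)).mp (hσ j)
    rw [hi'] at hβ
    rw [hβ, hj', hπ] at this
    exact this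
  · exact ⟨σ, hσ, hW⟩
end
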